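/- For every unranked labeled tree t and every k >= 0: sum_{z,a,i} n_{z,i,a} log2(n_z/n_{z,i,a}) equals both H^ell_k(t) + H^{ell,deg}_k(t) and sum_{z,i} n_{z,i} log2(n_z/n_{z,i}) + H^{deg,ell}_k(t); consequently H^ell_k(t) + H^{ell,deg}_k(t) <= H^deg(t) + H^{deg,ell}_k(t). -/

import Mathlib

/-- Last `k` entries of a list. -/
def lastN {α} (k : ℕ) (l : List α) : List α := l.drop (l.length - k)

/-- Generic empirical entropy in per-node form: for each node `e` of `D` we add
`log2 (#{e' | cond e' = cond e} / #{e' | cond e' = cond e ∧ val e' = val e})`.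
Grouping nodes by the pair `(cond, val)` recovers the usual form
`∑_z ∑_w m_{z,w} log2 (m_z / m_{z,w})`. -/
noncomputable def entropySum {α β γ : Type*} [DecidableEq β] [DecidableEq γ]
    (D : List α) (cond : α → β) (val : α → γ) : ℝ :=
  (D.map (fun e => Real.logb 2
    ((D.countP (fun e' => decide (cond e' = cond e)) : ℝ) /
     (D.countP (fun e' => decide (cond e' = cond e ∧ val e' = val e)) : ℝ)))).sum

/-- `k`-label-history given the list of ancestor labels (padded with `box`). -/
def kLabHist {σ} (box : σ) (k : ℕ) (h : List σ) : List σ :=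
  lastN k (List.replicate k box ++ h)
-- Unranked ordered labeled trees and forests.
mutual
inductive UTree (σ : Type) where
  | node (a : σ) (children : UForest σ) : UTree σ
inductive UForest (σ : Type) where
  | nil : UForest σ
  | cons (t : UTree σ) (f : UForest σ) : UForest σ
end

/-- Number of trees in a forest. -/
def UForest.len {σ} : UForest σ → ℕ
  | .nil => 0
  | .cons _ f => 1 + f.len

mutual
/-- List of (label-history, label, degree) triples, one per node. -/
def udata {σ} (hist : List σ) : UTree σ → List (List σ × σ × ℕ)
  | .node a f => (hist, a, f.len) :: fudata (hist ++ [a]) f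
/-- Node data of a forest of subtrees rooted at label-history `hist`. -/
def fudata {σ} (hist : List σ) : UForest σ → List (List σ × σ × ℕ)
  | .nil => []
  | .cons t f => udata hist t ++ fudata hist f
end

/-- Number of nodes of an unranked tree. -/
def sizeU {σ} (t : UTree σ) : ℕ := (udata [] t).length
/-- `k`-th order label entropy `H^ℓ_k` of an unranked tree. -/
noncomputable def HlU {σ} [DecidableEq σ] (box : σ) (k : ℕ) (t : UTree σ) : ℝ :=
  entropySum (udata [] t) (fun e => kLabHist box k e.1) (fun e => e.2.1)

/-- `k`-th order label-degree entropy `H^{ℓ,deg}_k` of an unranked tree. -/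
noncomputable def HldU {σ} [DecidableEq σ] (box : σ) (k : ℕ) (t : UTree σ) : ℝ :=
  entropySum (udata [] t) (fun e => (kLabHist box k e.1, e.2.1)) (fun e => e.2.2)

/-- `k`-th order degree-label entropy `H^{deg,ℓ}_k` of an unranked tree. -/
noncomputable def HdlU {σ} [DecidableEq σ] (box : σ) (k : ℕ) (t : UTree σ) : ℝ :=
  entropySum (udata [] t) (fun e => (kLabHist box k e.1, e.2.2)) (fun e => e.2.1)

/-- Degree entropy `H^deg` of an unranked tree: `∑_i n_i log2(|t|/n_i)`. -/
noncomputable def HdegU {σ} [DecidableEq σ] (t : UTree σ) : ℝ :=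
  entropySum (udata [] t) (fun _ => ()) (fun e => e.2.2)

/-- The refinement `∑_{z,i,a} n_{z,i,a} log2(n_z / n_{z,i,a})` (condition: `k`-label-history,
value: the pair (label, degree)). -/
noncomputable def HlabDegU {σ} [DecidableEq σ] (box : σ) (k : ℕ) (t : UTree σ) : ℝ :=
  entropySum (udata [] t) (fun e => kLabHist box k e.1) (fun e => e.2)

/-- The quantity `∑_{z,i} n_{z,i} log2(n_z / n_{z,i})` (condition: `k`-label-history,
value: degree). -/
noncomputable def HdegRelU {σ} [DecidableEq σ] (box : σ) (k : ℕ) (t : UTree σ) : ℝ :=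
  entropySum (udata [] t) (fun e => kLabHist box k e.1) (fun e => e.2.2)


open Real

lemma sum_map_add' {α} (l : List α) (f g : α → ℝ) :
    (l.map fun x => f x + g x).sum = (l.map f).sum + (l.map g).sum := by
  induction l with
  | nil => simp
  | cons a l ih => simp [ih]; ring

lemma entropySum_chain {α β γ δ : Type*} [DecidableEq β] [DecidableEq γ] [DecidableEq δ]
    (D : List α) (c : α → β) (v : α → γ) (w : α → δ) :
    entropySum D c (fun e => (v e, w e)) =
      entropySum D c v + entropySum D (fun e => (c e, v e)) w := by
  unfold entropySum
  rw [← sum_map_add']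
  congr 1
  apply List.map_congr_left
  intro e he
  have hB' : D.countP (fun e' => decide ((c e', v e') = (c e, v e)))
      = D.countP (fun e' => decide (c e' = c e ∧ v e' = v e)) :=
    List.countP_congr fun x _ => by simp [Prod.ext_iff]
  have hC' : D.countP (fun e' => decide ((c e', v e') = (c e, v e) ∧ w e' = w e))
      = D.countP (fun e' => decide (c e' = c e ∧ (v e', w e') = (v e, w e))) :=
    List.countP_congr fun x _ => by simp [Prod.ext_iff]; tauto
  rw [hB', hC']
  have hCpos : 0 < D.countP (fun e' => decide (c e' = c e ∧ (v e', w e') = (v e, w e))) :=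
    List.countP_pos_iff.mpr ⟨e, he, by simp⟩
  have hCB : D.countP (fun e' => decide (c e' = c e ∧ (v e', w e') = (v e, w e)))
      ≤ D.countP (fun e' => decide (c e' = c e ∧ v e' = v e)) :=
    List.countP_mono_left fun x _ => by simp [Prod.ext_iff]; tauto
  have hBA : D.countP (fun e' => decide (c e' = c e ∧ v e' = v e))
      ≤ D.countP (fun e' => decide (c e' = c e)) :=
    List.countP_mono_left fun x _ => by simp; tauto
  set A := D.countP (fun e' => decide (c e' = c e))
  set B := D.countP (fun e' => decide (c e' = c e ∧ v e' = v e))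
  set C := D.countP (fun e' => decide (c e' = c e ∧ (v e', w e') = (v e, w e)))
  have hc : (0:ℝ) < C := by exact_mod_cast hCpos
  have hb : (0:ℝ) < B := lt_of_lt_of_le hc (by exact_mod_cast hCB)
  have ha : (0:ℝ) < A := lt_of_lt_of_le hb (by exact_mod_cast hBA)
  rw [← Real.logb_mul (by positivity) (by positivity)]
  congr 1
  field_simp

lemma entropySum_val_swap {α β γ δ : Type*} [DecidableEq β] [DecidableEq γ] [DecidableEq δ]
    (D : List α) (c : α → β) (v : α → γ) (w : α → δ) :
    entropySum D c (fun e => (v e, w e)) = entropySum D c (fun e => (w e, v e)) := by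
  unfold entropySum
  congr 1
  apply List.map_congr_left
  intro e he
  have : D.countP (fun e' => decide (c e' = c e ∧ (v e', w e') = (v e, w e)))
      = D.countP (fun e' => decide (c e' = c e ∧ (w e', v e') = (w e, v e))) :=
    List.countP_congr fun x _ => by simp [Prod.ext_iff]; tauto
  rw [this]

lemma countP_partition {α κ : Type*} [DecidableEq κ] (D : List α) (key : α → κ) :
    ∑ x ∈ (D.map key).toFinset, D.countP (fun e => decide (key e = x)) = D.length := by
  have h := Multiset.toFinset_sum_count_eq (↑(D.map key) : Multiset κ)
  have h2 : ∀ x, Multiset.count x (↑(D.map key) : Multiset κ)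
      = D.countP (fun e => decide (key e = x)) := by
    intro x
    rw [Multiset.coe_count, List.count_eq_countP, List.countP_map]
    exact List.countP_congr fun y _ => by simp
  simp only [List.toFinset_coe, Multiset.coe_card, List.length_map] at h
  rw [← h]
  simp [h2]

lemma sum_map_key {α κ : Type*} [DecidableEq κ] (D : List α) (key : α → κ) (g : κ → ℝ) :
    (D.map (fun e => g (key e))).sum
      = ∑ x ∈ (D.map key).toFinset, (D.countP (fun e => decide (key e = x)) : ℝ) * g x := by
  have h := Finset.sum_multiset_map_count (↑(D.map key) : Multiset κ) g
  have h2 : ∀ x, Multiset.count x (↑(D.map key) : Multiset κ)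
      = D.countP (fun e => decide (key e = x)) := by
    intro x
    rw [Multiset.coe_count, List.count_eq_countP, List.countP_map]
    exact List.countP_congr fun y _ => by simp
  simp only [List.toFinset_coe, h2, nsmul_eq_mul, Multiset.map_coe, Multiset.sum_coe] at h
  rw [← h, List.map_map]
  rfl

lemma key_ineq {β γ : Type*} (K : Finset (β × γ)) (a : β → ℝ) (b : β × γ → ℝ) (cc : γ → ℝ)
    (n : ℝ) (hn : 0 < n)
    (hb : ∀ x ∈ K, 0 < b x) (hba : ∀ x ∈ K, b x ≤ a x.1) (hbc : ∀ x ∈ K, b x ≤ cc x.2)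
    (hsumb : ∑ x ∈ K, b x = n) (hprod : ∑ x ∈ K, a x.1 * cc x.2 ≤ n ^ 2) :
    ∑ x ∈ K, b x * Real.logb 2 (a x.1 / b x) ≤ ∑ x ∈ K, b x * Real.logb 2 (n / cc x.2) := by
  have hlog2 : 0 < Real.log 2 := Real.log_pos (by norm_num)
  rw [← sub_nonpos, ← Finset.sum_sub_distrib]
  have step1 : ∀ x ∈ K, b x * Real.logb 2 (a x.1 / b x) - b x * Real.logb 2 (n / cc x.2)
      ≤ (a x.1 * cc x.2 / n - b x) / Real.log 2 := by
    intro x hx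
    have hbx := hb x hx
    have hax : 0 < a x.1 := lt_of_lt_of_le hbx (hba x hx)
    have hcx : 0 < cc x.2 := lt_of_lt_of_le hbx (hbc x hx)
    have ht : 0 < a x.1 * cc x.2 / (b x * n) := by positivity
    have hlogs : Real.logb 2 (a x.1 / b x) - Real.logb 2 (n / cc x.2)
        = Real.log (a x.1 * cc x.2 / (b x * n)) / Real.log 2 := by
      unfold Real.logb
      rw [Real.log_div (ne_of_gt hax) (ne_of_gt hbx),
        Real.log_div (ne_of_gt hn) (ne_of_gt hcx),
        Real.log_div (ne_of_gt (by positivity : (0:ℝ) < a x.1 * cc x.2))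
          (ne_of_gt (by positivity : (0:ℝ) < b x * n)),
        Real.log_mul (ne_of_gt hax) (ne_of_gt hcx),
        Real.log_mul (ne_of_gt hbx) (ne_of_gt hn)]
      ring
    calc b x * Real.logb 2 (a x.1 / b x) - b x * Real.logb 2 (n / cc x.2)
        = b x * (Real.log (a x.1 * cc x.2 / (b x * n)) / Real.log 2) := by
          rw [← mul_sub, hlogs]
      _ ≤ b x * ((a x.1 * cc x.2 / (b x * n) - 1) / Real.log 2) := by
          apply mul_le_mul_of_nonneg_left _ (le_of_lt hbx)
          apply div_le_div_of_nonneg_right ?_ hlog2.le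
          exact Real.log_le_sub_one_of_pos ht
      _ = (a x.1 * cc x.2 / n - b x) / Real.log 2 := by
          field_simp
  calc ∑ x ∈ K, (b x * Real.logb 2 (a x.1 / b x) - b x * Real.logb 2 (n / cc x.2))
      ≤ ∑ x ∈ K, (a x.1 * cc x.2 / n - b x) / Real.log 2 := Finset.sum_le_sum step1
    _ = ((∑ x ∈ K, a x.1 * cc x.2) / n - n) / Real.log 2 := by
        rw [← Finset.sum_div, Finset.sum_sub_distrib, Finset.sum_div, hsumb]
    _ ≤ 0 := by
        apply div_nonpos_of_nonpos_of_nonneg _ (le_of_lt hlog2)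
        rw [sub_nonpos, div_le_iff₀ hn]
        nlinarith

lemma entropySum_cond_le {α β γ : Type*} [DecidableEq β] [DecidableEq γ]
    (D : List α) (c : α → β) (v : α → γ) :
    entropySum D c v ≤ entropySum D (fun _ => ()) v := by
  rcases eq_or_ne D [] with rfl | hD
  · simp [entropySum]
  have hn : 0 < D.length := List.length_pos_iff.mpr hD
  have hL : entropySum D c v
      = ∑ x ∈ (D.map (fun e => (c e, v e))).toFinset,
          ((D.countP (fun e => decide ((c e, v e) = x)) : ℝ)) *
          Real.logb 2 ((D.countP (fun e' => decide (c e' = x.1)) : ℝ) /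
            (D.countP (fun e' => decide ((c e', v e') = x)) : ℝ)) := by
    rw [entropySum]
    rw [show (D.map fun e => Real.logb 2
        (((D.countP fun e' => decide (c e' = c e)) : ℝ) /
         ((D.countP fun e' => decide (c e' = c e ∧ v e' = v e)) : ℝ)))
        = D.map (fun e => (fun x : β × γ => Real.logb 2
            ((D.countP (fun e' => decide (c e' = x.1)) : ℝ) /
             (D.countP (fun e' => decide ((c e', v e') = x)) : ℝ))) ((fun e => (c e, v e)) e))
        from List.map_congr_left fun e _ => by
          have h1 : D.countP (fun e' => decide ((c e', v e') = (c e, v e)))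
              = D.countP (fun e' => decide (c e' = c e ∧ v e' = v e)) :=
            List.countP_congr fun x _ => by simp [Prod.ext_iff]
          simp only [h1]]
    exact sum_map_key D (fun e => (c e, v e)) (fun x : β × γ => Real.logb 2
      ((D.countP (fun e' => decide (c e' = x.1)) : ℝ) /
       (D.countP (fun e' => decide ((c e', v e') = x)) : ℝ)))
  have hR : entropySum D (fun _ => ()) v
      = ∑ x ∈ (D.map (fun e => (c e, v e))).toFinset,
          ((D.countP (fun e => decide ((c e, v e) = x)) : ℝ)) *
          Real.logb 2 ((D.length : ℝ) / (D.countP (fun e' => decide (v e' = x.2)) : ℝ)) := by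
    rw [entropySum]
    rw [show (D.map fun e => Real.logb 2
        (((D.countP fun _ => decide ((() : Unit) = ())) : ℝ) /
         ((D.countP fun e' => decide ((() : Unit) = () ∧ v e' = v e)) : ℝ)))
        = D.map (fun e => (fun x : β × γ => Real.logb 2
            ((D.length : ℝ) / (D.countP (fun e' => decide (v e' = x.2)) : ℝ))) ((fun e => (c e, v e)) e))
        from List.map_congr_left fun e _ => by
          have h1 : D.countP (fun _ => decide ((() : Unit) = ())) = D.length := by
            simp
          have h2 : D.countP (fun e' => decide ((() : Unit) = () ∧ v e' = v e))
              = D.countP (fun e' => decide (v e' = v e)) :=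
            List.countP_congr fun x _ => by simp
          rw [h1, h2]]
    exact sum_map_key D (fun e => (c e, v e)) (fun x : β × γ => Real.logb 2
      ((D.length : ℝ) / (D.countP (fun e' => decide (v e' = x.2)) : ℝ)))
  rw [hL, hR]
  have hmem : ∀ x ∈ (D.map (fun e => (c e, v e))).toFinset, ∃ e ∈ D, (c e, v e) = x := by
    intro x hx
    simpa using List.mem_toFinset.mp hx
  refine key_ineq _ (fun z => (D.countP (fun e' => decide (c e' = z)) : ℝ))
    (fun x => (D.countP (fun e' => decide ((c e', v e') = x)) : ℝ))
    (fun w => (D.countP (fun e' => decide (v e' = w)) : ℝ))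
    (D.length : ℝ) (by exact_mod_cast hn) ?_ ?_ ?_ ?_ ?_
  · intro x hx
    obtain ⟨e, he, rfl⟩ := hmem x hx
    have : 0 < D.countP (fun e' => decide ((c e', v e') = (c e, v e))) :=
      List.countP_pos_iff.mpr ⟨e, he, by simp⟩
    beta_reduce
    exact_mod_cast this
  · intro x hx
    obtain ⟨e, he, rfl⟩ := hmem x hx
    have : D.countP (fun e' => decide ((c e', v e') = (c e, v e)))
        ≤ D.countP (fun e' => decide (c e' = (c e, v e).1)) :=
      List.countP_mono_left fun y _ => by simp [Prod.ext_iff]; try tauto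
    beta_reduce
    exact_mod_cast this
  · intro x hx
    obtain ⟨e, he, rfl⟩ := hmem x hx
    have : D.countP (fun e' => decide ((c e', v e') = (c e, v e)))
        ≤ D.countP (fun e' => decide (v e' = (c e, v e).2)) :=
      List.countP_mono_left fun y _ => by simp [Prod.ext_iff]; try tauto
    beta_reduce
    exact_mod_cast this
  · have := countP_partition D (fun e => (c e, v e))
    beta_reduce
    exact_mod_cast this
  · have hsub : (D.map (fun e => (c e, v e))).toFinset
        ⊆ (D.map c).toFinset ×ˢ (D.map v).toFinset := by
      intro x hx
      obtain ⟨e, he, rfl⟩ := hmem x hx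
      simp only [Finset.mem_product, List.mem_toFinset, List.mem_map]
      exact ⟨⟨e, he, rfl⟩, ⟨e, he, rfl⟩⟩
    calc ∑ x ∈ (D.map (fun e => (c e, v e))).toFinset,
          ((D.countP (fun e' => decide (c e' = x.1)) : ℝ)) *
          (D.countP (fun e' => decide (v e' = x.2)) : ℝ)
        ≤ ∑ x ∈ (D.map c).toFinset ×ˢ (D.map v).toFinset,
          ((D.countP (fun e' => decide (c e' = x.1)) : ℝ)) *
          (D.countP (fun e' => decide (v e' = x.2)) : ℝ) :=
          Finset.sum_le_sum_of_subset_of_nonneg hsub (fun _ _ _ => by positivity)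
      _ = (∑ z ∈ (D.map c).toFinset, (D.countP (fun e' => decide (c e' = z)) : ℝ)) *
          (∑ w ∈ (D.map v).toFinset, (D.countP (fun e' => decide (v e' = w)) : ℝ)) := by
          rw [Finset.sum_mul_sum, Finset.sum_product]
      _ = (D.length : ℝ) * (D.length : ℝ) := by
          rw [show (∑ z ∈ (D.map c).toFinset, (D.countP (fun e' => decide (c e' = z)) : ℝ))
              = (D.length : ℝ) from by exact_mod_cast congrArg Nat.cast (countP_partition D c),
            show (∑ w ∈ (D.map v).toFinset, (D.countP (fun e' => decide (v e' = w)) : ℝ))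
              = (D.length : ℝ) from by exact_mod_cast congrArg Nat.cast (countP_partition D v)]
      _ = (D.length : ℝ) ^ 2 := by ring

/-- For every unranked labeled tree and every `k`:
`∑_{z,a,i} n_{z,i,a} log2(n_z/n_{z,i,a})` equals both `H^ℓ_k + H^{ℓ,deg}_k` and
`∑_{z,i} n_{z,i} log2(n_z/n_{z,i}) + H^{deg,ℓ}_k`; consequently
`H^ℓ_k(t) + H^{ℓ,deg}_k(t) ≤ H^deg(t) + H^{deg,ℓ}_k(t)`. -/
theorem HlU_add_HldU_le_HdegU_add_HdlU {σ : Type} [DecidableEq σ] (box : σ) (k : ℕ)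
    (t : UTree σ) :
    HlabDegU box k t = HlU box k t + HldU box k t ∧
    HlabDegU box k t = HdegRelU box k t + HdlU box k t ∧
    HlU box k t + HldU box k t ≤ HdegU t + HdlU box k t := by
  have h1 : HlabDegU box k t = HlU box k t + HldU box k t :=
    entropySum_chain (udata [] t) (fun e => kLabHist box k e.1)
      (fun e => e.2.1) (fun e => e.2.2)
  have hswap : HlabDegU box k t
      = entropySum (udata [] t) (fun e => kLabHist box k e.1) (fun e => (e.2.2, e.2.1)) :=
    entropySum_val_swap (udata [] t) (fun e => kLabHist box k e.1)
      (fun e => e.2.1) (fun e => e.2.2)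
  have h2 : HlabDegU box k t = HdegRelU box k t + HdlU box k t := by
    rw [hswap]
    exact entropySum_chain (udata [] t) (fun e => kLabHist box k e.1)
      (fun e => e.2.2) (fun e => e.2.1)
  have h3 : HdegRelU box k t ≤ HdegU t :=
    entropySum_cond_le (udata [] t) (fun e => kLabHist box k e.1) (fun e => e.2.2)
  exact ⟨h1, h2, by linarith⟩
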